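/- (Correctness of the final learning step.) Let f : {0,1}^n → {0,1} be a Boolean function with g(x) = (-1)^{f(x)}, let ε > 0, and let L ⊆ {0,1}^n contain the support of ĝ, i.e. {s : ĝ(s) ≠ 0} ⊆ L. Suppose g̃ : {0,1}^n → ℝ satisfies |g̃(s) - ĝ(s)| ≤ ε for all s ∈ L and g̃(s) = 0 for s ∉ L, and let s₀ maximize g̃ over {0,1}^n. Then the parity hypothesis s₀ is ε-agnostically optimal: Pr_{x ~ U_n}[s₀·x mod 2 ≠ f(x)] ≤ min_{s ∈ {0,1}^n} Pr_{x ~ U_n}[s·x mod 2 ≠ f(x)] + ε. -/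

import Mathlib

open Finset

def dotp {n : ℕ} (s x : Fin n → ZMod 2) : ZMod 2 := ∑ i, s i * x i

noncomputable def hatg {n : ℕ} (f : (Fin n → ZMod 2) → ZMod 2)
    (s : Fin n → ZMod 2) : ℝ :=
  (1 / 2 ^ n) * ∑ x, (-1 : ℝ) ^ (f x).val * (-1 : ℝ) ^ (dotp s x).val

lemma my_sign_mul (a b : ZMod 2) :
    (-1 : ℝ) ^ a.val * (-1 : ℝ) ^ b.val = if b = a then 1 else -1 := by
  have h2 : ∀ c : ZMod 2, c = 0 ∨ c = 1 := by decide
  rcases h2 a with rfl | rfl <;> rcases h2 b with rfl | rfl <;> simp [ZMod.val_one]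

lemma hatg_eq {n : ℕ} (f : (Fin n → ZMod 2) → ZMod 2) (s : Fin n → ZMod 2) :
    hatg f s = 1 - 2 * ((univ.filter (fun x : Fin n → ZMod 2 => dotp s x ≠ f x)).card : ℝ) / 2 ^ n := by
  have hcard : (univ.filter (fun x : Fin n → ZMod 2 => dotp s x = f x)).card
      + (univ.filter (fun x : Fin n → ZMod 2 => dotp s x ≠ f x)).card = 2 ^ n := by
    rw [Finset.card_filter_add_card_filter_not]
    simp [Fintype.card_fun]
  have hsum : ∑ x : Fin n → ZMod 2, (-1 : ℝ) ^ (f x).val * (-1 : ℝ) ^ (dotp s x).val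
      = ((univ.filter (fun x : Fin n → ZMod 2 => dotp s x = f x)).card : ℝ)
        - ((univ.filter (fun x : Fin n → ZMod 2 => dotp s x ≠ f x)).card : ℝ) := by
    simp_rw [my_sign_mul]
    rw [Finset.sum_ite, Finset.sum_const, Finset.sum_const]
    simp [sub_eq_add_neg]
  have h2 : (0:ℝ) < 2 ^ n := by positivity
  rw [hatg, hsum]
  have hc : ((univ.filter (fun x : Fin n → ZMod 2 => dotp s x = f x)).card : ℝ)
      = 2 ^ n - ((univ.filter (fun x : Fin n → ZMod 2 => dotp s x ≠ f x)).card : ℝ) := by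
    have : ((univ.filter (fun x : Fin n → ZMod 2 => dotp s x = f x)).card : ℝ)
        + ((univ.filter (fun x : Fin n → ZMod 2 => dotp s x ≠ f x)).card : ℝ) = 2 ^ n := by
      exact_mod_cast congrArg (Nat.cast : ℕ → ℝ) hcard
    linarith
  rw [hc]
  field_simp
  ring

/-- Correctness of the final learning step: if `L` contains the support of `ĝ`, `g̃`
is `ε`-accurate on `L` and vanishes off `L`, and `s₀` maximizes `g̃`, then the parity
hypothesis `s₀` is `ε`-agnostically optimal under the uniform distribution. -/
theorem final_learning_step_correct (n : ℕ) (hn : 0 < n)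
    (f : (Fin n → ZMod 2) → ZMod 2) (ε : ℝ) (hε : 0 < ε)
    (L : Finset (Fin n → ZMod 2))
    (hLsupp : ∀ s, hatg f s ≠ 0 → s ∈ L)
    (gtil : (Fin n → ZMod 2) → ℝ)
    (hgtil : ∀ s ∈ L, |gtil s - hatg f s| ≤ ε)
    (hgtil0 : ∀ s ∉ L, gtil s = 0)
    (s₀ : Fin n → ZMod 2) (hs₀ : ∀ s, gtil s ≤ gtil s₀) :
    ∀ s, ((univ.filter (fun x : Fin n → ZMod 2 => dotp s₀ x ≠ f x)).card : ℝ) / 2 ^ n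
        ≤ ((univ.filter (fun x : Fin n → ZMod 2 => dotp s x ≠ f x)).card : ℝ) / 2 ^ n + ε := by
  intro s
  have key : hatg f s ≤ hatg f s₀ + 2 * ε := by
    have h1 : hatg f s ≤ gtil s + ε := by
      by_cases hs : s ∈ L
      · have := hgtil s hs; rw [abs_le] at this; linarith [this.1]
      · have h0 : hatg f s = 0 := by
          by_contra h; exact hs (hLsupp s h)
        rw [h0, hgtil0 s hs]; linarith
    have h2 : gtil s₀ ≤ hatg f s₀ + ε := by
      by_cases hs : s₀ ∈ L
      · have := hgtil s₀ hs; rw [abs_le] at this; linarith [this.2]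
      · have h0 : hatg f s₀ = 0 := by
          by_contra h; exact hs (hLsupp s₀ h)
        rw [h0, hgtil0 s₀ hs]; linarith
    linarith [hs₀ s]
  have e1 := hatg_eq f s₀
  have e2 := hatg_eq f s
  have h2 : (0:ℝ) < 2 ^ n := by positivity
  rw [e1, e2] at key
  have ha : 2 * ((univ.filter (fun x : Fin n → ZMod 2 => dotp s₀ x ≠ f x)).card : ℝ) / 2 ^ n
      = 2 * (((univ.filter (fun x : Fin n → ZMod 2 => dotp s₀ x ≠ f x)).card : ℝ) / 2 ^ n) := by ring
  have hb : 2 * ((univ.filter (fun x : Fin n → ZMod 2 => dotp s x ≠ f x)).card : ℝ) / 2 ^ n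
      = 2 * (((univ.filter (fun x : Fin n → ZMod 2 => dotp s x ≠ f x)).card : ℝ) / 2 ^ n) := by ring
  rw [ha, hb] at key
  linarith
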